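/- Let ρ = 10, x⊙y = xᵀJ_{10}y, P_1 = (1,1,1,1,0,0,−1,−1,1,1) and P_2 = (1,1,1,1,2,2,−1,−3,1,3). Then P_1⊙P_1 = 0, P_2⊙P_2 = 0, P_1⊙P_2 = −8 ≠ 0, and the map φ_{P_1,P_2}(x) = 2((P_1⊙x)·P_2 + (P_2⊙x)·P_1)/(P_1⊙P_2) − x belongs to O^+_{Λ_{10}}: it maps ℤ^{10} onto ℤ^{10}, preserves the Lorentz product, and satisfies (φ_{P_1,P_2}(D))⊙D < 0 where D = (1,…,1). -/

import Mathlib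

/-!
Since `P⊙P = Q⊙Q = 0`, the map `φ_{P,Q}` fixes `P` and `Q` and negates their Lorentz-orthogonal
complement, so it is an involutive isometry. Integrality comes from `J_ρ = 2I - 𝟙𝟙ᵀ`: with
`P₂ = P₁ + 2R`, `R = (0,0,0,0,1,1,0,-1,0,1)`, one gets `φ(x) = w(x) P₁ + u(x) R - x` where
`u = -(P₁⊙x)/2` and `w = -(P₁⊙x + P₂⊙x)/4` are integral linear forms on `ℤ¹⁰`. Being an
involution, `φ` then maps `ℤ¹⁰` onto itself.
-/

/-- The Lorentz product over `ℝ`, given by the matrix `J_ρ` with diagonal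
entries `1` and off-diagonal entries `-1`. -/
noncomputable def lor {ρ : ℕ} (x y : Fin ρ → ℝ) : ℝ :=
  ∑ i, ∑ j, x i * (if i = j then (1 : ℝ) else -1) * y j

/-- The map `φ_{P,Q}(x) = 2((P⊙x)Q + (Q⊙x)P)/(P⊙Q) - x`. -/
noncomputable def phiV {ρ : ℕ} (P Q : Fin ρ → ℝ) (x : Fin ρ → ℝ) : Fin ρ → ℝ :=
  (2 / lor P Q) • ((lor P x) • Q + (lor Q x) • P) - x

section Lorentz

variable {ρ : ℕ}

theorem lor_eq_two_mul_dotProduct_sub (x y : Fin ρ → ℝ) :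
    lor x y = 2 * (x ⬝ᵥ y) - (∑ i, x i) * ∑ j, y j := by
  have hJ : ∀ i j, x i * (if i = j then (1 : ℝ) else -1) * y j =
      2 * (if i = j then x i * y j else 0) - x i * y j := by
    intro i j
    split_ifs <;> ring
  simp only [lor, hJ, Finset.sum_sub_distrib, ← Finset.mul_sum, Finset.sum_ite_eq,
    Finset.mem_univ, if_true, Finset.sum_mul_sum, dotProduct]

theorem lor_comm (x y : Fin ρ → ℝ) : lor x y = lor y x := by
  rw [lor_eq_two_mul_dotProduct_sub, lor_eq_two_mul_dotProduct_sub, dotProduct_comm,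
    mul_comm (∑ i, x i)]

theorem lor_add_left (x y z : Fin ρ → ℝ) : lor (x + y) z = lor x z + lor y z := by
  simp only [lor_eq_two_mul_dotProduct_sub, add_dotProduct, Pi.add_apply,
    Finset.sum_add_distrib]
  ring

theorem lor_sub_left (x y z : Fin ρ → ℝ) : lor (x - y) z = lor x z - lor y z := by
  simp only [lor_eq_two_mul_dotProduct_sub, sub_dotProduct, Pi.sub_apply,
    Finset.sum_sub_distrib]
  ring

theorem lor_smul_left (c : ℝ) (x y : Fin ρ → ℝ) : lor (c • x) y = c * lor x y := by
  simp only [lor_eq_two_mul_dotProduct_sub, smul_dotProduct, Pi.smul_apply, smul_eq_mul,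
    ← Finset.mul_sum]
  ring

theorem lor_phiV_left (P Q x y : Fin ρ → ℝ) :
    lor (phiV P Q x) y = 2 / lor P Q * (lor P x * lor Q y + lor Q x * lor P y) - lor x y := by
  rw [phiV, lor_sub_left, lor_smul_left, lor_add_left, lor_smul_left, lor_smul_left]

theorem lor_phiV_right (P Q x y : Fin ρ → ℝ) :
    lor x (phiV P Q y) = 2 / lor P Q * (lor P y * lor Q x + lor Q y * lor P x) - lor x y := by
  rw [lor_comm, lor_phiV_left, lor_comm y x]

section Reflection

variable {P Q : Fin ρ → ℝ}

theorem lor_phiV_phiV (hP : lor P P = 0) (hQ : lor Q Q = 0) (hPQ : lor P Q ≠ 0)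
    (x y : Fin ρ → ℝ) : lor (phiV P Q x) (phiV P Q y) = lor x y := by
  rw [lor_phiV_left, lor_phiV_right, lor_phiV_right, lor_phiV_right, lor_comm Q P, hP, hQ]
  field_simp
  ring

theorem phiV_phiV (hP : lor P P = 0) (hQ : lor Q Q = 0) (hPQ : lor P Q ≠ 0)
    (x : Fin ρ → ℝ) : phiV P Q (phiV P Q x) = x := by
  have hPx : lor P (phiV P Q x) = lor P x := by
    rw [lor_phiV_right, lor_comm Q P, hP]
    field_simp
    ring
  have hQx : lor Q (phiV P Q x) = lor Q x := by
    rw [lor_phiV_right, hQ]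
    field_simp
    ring
  rw [phiV, hPx, hQx, phiV, sub_sub_cancel]

end Reflection

end Lorentz

theorem phiV_eq_of_eq_add_two_smul {ρ : ℕ} {P Q R x : Fin ρ → ℝ} {u w : ℝ}
    (hQR : Q = P + 2 • R) (hPQ : lor P Q = -8) (hPx : lor P x = -2 * u)
    (hQx : lor Q x = 2 * u - 4 * w) : phiV P Q x = w • P + u • R - x := by
  rw [phiV, hPQ, hPx, hQx, hQR]
  module

theorem exists_intCast_phiV_P₁_P₂ (x : Fin 10 → ℤ) : ∃ y : Fin 10 → ℤ,
    phiV ![1, 1, 1, 1, 0, 0, -1, -1, 1, 1] ![1, 1, 1, 1, 2, 2, -1, -3, 1, 3]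
      (fun t => (x t : ℝ)) = fun t => (y t : ℝ) := by
  set u : ℤ := x 0 + x 1 + x 2 + x 3 + 2 * x 4 + 2 * x 5 + 3 * x 6 + 3 * x 7 + x 8 + x 9
  set w : ℤ := 2 * x 0 + 2 * x 1 + 2 * x 2 + 2 * x 3 + 2 * x 4 + 2 * x 5 + 4 * x 6 + 5 * x 7
    + 2 * x 8 + x 9
  refine ⟨w • ![1, 1, 1, 1, 0, 0, -1, -1, 1, 1] + u • ![0, 0, 0, 0, 1, 1, 0, -1, 0, 1] - x,
    ?_⟩
  rw [phiV_eq_of_eq_add_two_smul (R := ![0, 0, 0, 0, 1, 1, 0, -1, 0, 1]) (u := u) (w := w)]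
  · ext t
    fin_cases t <;> simp
  · ext t
    fin_cases t <;> norm_num
  · norm_num [lor_eq_two_mul_dotProduct_sub, dotProduct, Fin.sum_univ_succ]
  all_goals
    simp only [lor_eq_two_mul_dotProduct_sub, dotProduct, Fin.sum_univ_succ, Matrix.cons_val,
      Finset.univ_eq_empty, Finset.sum_empty, u, w]
    push_cast
    ring

/-- For `ρ = 10`, `P₁ = (1,1,1,1,0,0,-1,-1,1,1)` and
`P₂ = (1,1,1,1,2,2,-1,-3,1,3)`: `P₁⊙P₁ = 0`, `P₂⊙P₂ = 0`, `P₁⊙P₂ = -8 ≠ 0`,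
and `φ_{P₁,P₂}` lies in `O⁺_{Λ₁₀}`: it maps `ℤ¹⁰` onto `ℤ¹⁰`, preserves the
Lorentz product, and satisfies `φ(D)⊙D < 0`. -/
theorem phi_P1_P2_in_OPlus :
    let P₁ : Fin 10 → ℝ := ![1, 1, 1, 1, 0, 0, -1, -1, 1, 1]
    let P₂ : Fin 10 → ℝ := ![1, 1, 1, 1, 2, 2, -1, -3, 1, 3]
    let D : Fin 10 → ℝ := fun _ => 1
    lor P₁ P₁ = 0 ∧ lor P₂ P₂ = 0 ∧ lor P₁ P₂ = -8 ∧ lor P₁ P₂ ≠ 0 ∧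
    (∀ x : Fin 10 → ℤ, ∃ y : Fin 10 → ℤ,
      phiV P₁ P₂ (fun t => (x t : ℝ)) = fun t => (y t : ℝ)) ∧
    (∀ y : Fin 10 → ℤ, ∃ x : Fin 10 → ℤ,
      phiV P₁ P₂ (fun t => (x t : ℝ)) = fun t => (y t : ℝ)) ∧
    (∀ x y : Fin 10 → ℝ, lor (phiV P₁ P₂ x) (phiV P₁ P₂ y) = lor x y) ∧
    lor (phiV P₁ P₂ D) D < 0 := by
  intro P₁ P₂ D
  have h₁₁ : lor P₁ P₁ = 0 := by
    norm_num [P₁, lor_eq_two_mul_dotProduct_sub, dotProduct, Fin.sum_univ_succ]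
  have h₂₂ : lor P₂ P₂ = 0 := by
    norm_num [P₂, lor_eq_two_mul_dotProduct_sub, dotProduct, Fin.sum_univ_succ]
  have h₁₂ : lor P₁ P₂ = -8 := by
    norm_num [P₁, P₂, lor_eq_two_mul_dotProduct_sub, dotProduct, Fin.sum_univ_succ]
  have hne : lor P₁ P₂ ≠ 0 := by norm_num [h₁₂]
  refine ⟨h₁₁, h₂₂, h₁₂, hne, exists_intCast_phiV_P₁_P₂, fun y => ?_,
    lor_phiV_phiV h₁₁ h₂₂ hne, ?_⟩
  · obtain ⟨x, hx⟩ := exists_intCast_phiV_P₁_P₂ y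
    exact ⟨x, by rw [← hx, phiV_phiV h₁₁ h₂₂ hne]⟩
  · rw [lor_phiV_left, h₁₂]
    norm_num [P₁, P₂, D, lor_eq_two_mul_dotProduct_sub, dotProduct, Fin.sum_univ_succ]
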